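/- arXiv:1602.06003 — 2 statements merged into one kernel-verified Lean document; each statement's English description precedes it below -/
import Mathlib

section
/- If G is a finite group of unit spinors in Cl(3) (closed under multiplication, containing -R and R̃ whenever it contains R), then G, viewed as a set of vectors in 4D Euclidean space via the norm R R̃, is a root system: it contains with each element R only the scalar multiples ±R, and it is closed under the reflections s_{R₁}(R₂) = R₂ - 2(R₁,R₂)/(R₁,R₁) R₁ for all R₁ ∈ G. -/
noncomputable section
open CliffordAlgebra

/-- The quadratic form of Euclidean ℝ³. -/
def Q3 : QuadraticForm ℝ (Fin 3 → ℝ) :=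
  QuadraticMap.weightedSumSquares ℝ (fun _ : Fin 3 => (1 : ℝ))

/-- The Clifford algebra Cl(3) of Euclidean ℝ³. -/
abbrev Cl3 := CliffordAlgebra Q3

/-- The orthonormal generators e₁, e₂, e₃ of Cl(3). -/
def e (i : Fin 3) : Cl3 := ι Q3 (Pi.single i 1)

/-- The spinor pairing `(R₁, R₂) = ½(R₁ R̃₂ + R₂ R̃₁)` on Cl(3); for even elements it is a
scalar, and it realises the 4D Euclidean inner product on the even subalgebra. -/
def spinorForm (R₁ R₂ : Cl3) : Cl3 :=
  (1 / 2 : ℝ) • (R₁ * reverse (Q := Q3) R₂ + R₂ * reverse (Q := Q3) R₁)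

theorem CliffordAlgebra.smul_eq_self_or_neg_of_mul_reverse_eq_one {K : Type*} [Field K]
    {M : Type*} [AddCommGroup M] [Module K M] {Q : QuadraticForm K M}
    [Nontrivial (CliffordAlgebra Q)] {x : CliffordAlgebra Q} {c : K}
    (hx : x * reverse x = 1) (hcx : c • x * reverse (c • x) = 1) :
    c • x = x ∨ c • x = -x := by
  have hc : c * c = 1 := by
    apply (algebraMap K (CliffordAlgebra Q)).injective
    rw [map_one, map_mul, ← hcx, map_smul, smul_mul_smul_comm, hx, Algebra.smul_def, mul_one,
      map_mul]
  rcases mul_self_eq_one_iff.mp hc with rfl | rfl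
  · exact Or.inl (one_smul K x)
  · exact Or.inr (neg_one_smul K x)

instance : Nontrivial Cl3 :=
  letI := invertibleOfNonzero (two_ne_zero' ℝ)
  inferInstance

theorem sub_two_smul_spinorForm_mul_eq_neg_mul_reverse_mul {R₁ : Cl3} (R₂ : Cl3)
    (h₁ : reverse (Q := Q3) R₁ * R₁ = 1) :
    R₂ - ((2 : ℝ) • spinorForm R₁ R₂) * R₁ = -(R₁ * reverse (Q := Q3) R₂ * R₁) := by
  rw [spinorForm, smul_smul, mul_one_div_cancel (two_ne_zero' ℝ), one_smul, add_mul,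
    mul_assoc R₂, h₁, mul_one]
  abel

theorem spinor_group_induces_root_system_general
    (G : Set Cl3)
    (hunit : ∀ R ∈ G, R * reverse (Q := Q3) R = 1)
    (hmul : ∀ R₁ ∈ G, ∀ R₂ ∈ G, R₁ * R₂ ∈ G)
    (hneg : ∀ R ∈ G, -R ∈ G)
    (hrev : ∀ R ∈ G, reverse (Q := Q3) R ∈ G) :
    (∀ R ∈ G, ∀ c : ℝ, c • R ∈ G → c • R = R ∨ c • R = -R) ∧
    (∀ R₁ ∈ G, ∀ R₂ ∈ G, R₂ - ((2 : ℝ) • spinorForm R₁ R₂) * R₁ ∈ G) := by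
  refine ⟨fun R hR c hcR ↦ smul_eq_self_or_neg_of_mul_reverse_eq_one (hunit R hR) (hunit _ hcR),
    fun R₁ h₁ R₂ h₂ ↦ ?_⟩
  have hR₁ : reverse (Q := Q3) R₁ * R₁ = 1 := by
    simpa only [reverse_reverse] using hunit _ (hrev R₁ h₁)
  rw [sub_two_smul_spinorForm_mul_eq_neg_mul_reverse_mul R₂ hR₁, mul_assoc]
  exact hneg _ (hmul _ h₁ _ (hmul _ (hrev _ h₂) _ h₁))

/-- **Induction Theorem.** A finite group `G` of unit spinors in Cl(3)
(closed under multiplication, and containing `-R` and `R̃` whenever it contains `R`),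
viewed as a set of vectors in the 4D Euclidean even subalgebra, is a root system:
it contains with each `R` only the scalar multiples `±R`, and it is closed under the
reflections `s_{R₁}(R₂) = R₂ - 2(R₁,R₂)/(R₁,R₁) R₁` (note `(R₁,R₁) = R₁R̃₁ = 1`). -/
theorem spinor_group_induces_root_system
    (G : Set Cl3) (hfin : G.Finite)
    (heven : ∀ R ∈ G, R ∈ evenOdd Q3 0)
    (hunit : ∀ R ∈ G, R * reverse (Q := Q3) R = 1)
    (hone : (1 : Cl3) ∈ G)
    (hmul : ∀ R₁ ∈ G, ∀ R₂ ∈ G, R₁ * R₂ ∈ G)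
    (hneg : ∀ R ∈ G, -R ∈ G)
    (hrev : ∀ R ∈ G, reverse (Q := Q3) R ∈ G) :
    (∀ R ∈ G, ∀ c : ℝ, c • R ∈ G → c • R = R ∨ c • R = -R) ∧
    (∀ R₁ ∈ G, ∀ R₂ ∈ G, R₂ - ((2 : ℝ) • spinorForm R₁ R₂) * R₁ ∈ G) :=
  spinor_group_induces_root_system_general G hunit hmul hneg hrev
end
end

section
/- In Cl(3), each of the 16 spinors ½(±1 ± e₁e₂ ± e₂e₃ ± e₃e₁) equals ±exp(πB/3) for a bivector B with B² = -1 of the form B = (±e₁e₂ ± e₂e₃ ± e₃e₁)/√3, and hence has multiplicative order dividing 6 (order 3 or 6). -/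
noncomputable section
open CliffordAlgebra

/-! With `σ = s₀` and `w` the bivector part of `2R`, one has `w² = -3` because distinct
basis bivectors anticommute, so `B = σw/√3` squares to `-1` and
`σR = ½ + (√3/2)B = cos(π/3) + sin(π/3)B`. As `B² = -1`, the map `θ ↦ cos θ + B sin θ` is
the exponential series and satisfies de Moivre's formula; hence `R⁶ = σ⁶ = 1`, while
`R² = cos(2π/3) + B sin(2π/3) ≠ 1`. -/

open Real

section UnitBivector

variable {A : Type*} [Ring A] [Algebra ℝ A] {B : A}

theorem cos_smul_one_add_sin_smul_mul (hB : B * B = -1) (θ φ : ℝ) :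
    (cos θ • (1 : A) + sin θ • B) * (cos φ • 1 + sin φ • B) =
      cos (θ + φ) • 1 + sin (θ + φ) • B := by
  simp only [cos_add, sin_add, mul_add, add_mul, smul_mul_smul_comm, one_mul, mul_one, hB]
  module

theorem cos_smul_one_add_sin_smul_pow (hB : B * B = -1) (θ : ℝ) (n : ℕ) :
    (cos θ • (1 : A) + sin θ • B) ^ n = cos (n * θ) • 1 + sin (n * θ) • B := by
  induction n with
  | zero => simp
  | succ n ih => rw [pow_succ, ih, cos_smul_one_add_sin_smul_mul hB]; push_cast; ring_nf

theorem sin_eq_zero_of_cos_smul_one_add_sin_smul_eq_one [Nontrivial A] (hB : B * B = -1)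
    {θ : ℝ} (h : cos θ • (1 : A) + sin θ • B = 1) : sin θ = 0 := by
  have hsB : sin θ • B = (1 - cos θ) • (1 : A) := by
    rw [sub_smul, one_smul, eq_sub_iff_add_eq, add_comm, h]
  have hsum : (sin θ ^ 2 + (1 - cos θ) ^ 2) • (1 : A) = 0 := by
    have hsq := congrArg (fun x => x * x) hsB
    simp only [smul_mul_smul_comm, hB, one_mul] at hsq
    rw [add_smul, sq, sq, ← hsq, smul_neg, add_neg_cancel]
  have hcoeff := (smul_eq_zero.mp hsum).resolve_right one_ne_zero
  nlinarith [sq_nonneg (sin θ), sq_nonneg (1 - cos θ)]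

theorem pow_two_mul_of_mul_self_eq_neg_one (hB : B * B = -1) (k : ℕ) :
    B ^ (2 * k) = ((-1 : ℝ) ^ k) • (1 : A) := by
  rw [pow_mul, sq, hB, ← neg_one_smul ℝ (1 : A), smul_pow, one_pow]

variable {M : Type*} [AddCommGroup M] [Module ℝ M] [TopologicalSpace M]
  [IsTopologicalAddGroup M] [ContinuousSMul ℝ M]

theorem hasSum_exp_series_of_mul_self_eq_neg_one (hB : B * B = -1) (f : A →ₗ[ℝ] M) (θ : ℝ) :
    HasSum (fun n : ℕ => (θ ^ n / n.factorial) • f (B ^ n))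
      (f (cos θ • 1 + sin θ • B)) := by
  rw [map_add, map_smul, map_smul]
  refine HasSum.even_add_odd ?_ ?_
  · convert (hasSum_cos θ).smul_const (f 1) using 2 with k
    rw [pow_two_mul_of_mul_self_eq_neg_one hB, map_smul, smul_smul]
    congr 1
    ring
  · convert (hasSum_sin θ).smul_const (f B) using 2 with k
    rw [pow_succ B, pow_two_mul_of_mul_self_eq_neg_one hB, smul_mul_assoc, one_mul, map_smul,
      smul_smul]
    congr 1
    ring

end UnitBivector

instance inst_s10 : Nontrivial Cl3 :=
  haveI : Invertible (2 : ℝ) := invertibleOfNonzero two_ne_zero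
  inferInstance

theorem Q3_apply (v : Fin 3 → ℝ) : Q3 v = v 0 * v 0 + v 1 * v 1 + v 2 * v 2 := by
  simp [Q3, QuadraticMap.weightedSumSquares_apply, Fin.sum_univ_three]

theorem e_mul_self (i : Fin 3) : e i * e i = 1 := by
  rw [e, ι_sq_scalar]
  fin_cases i <;> simp [Q3_apply]

theorem e_mul_e_anticomm {i j : Fin 3} (h : i ≠ j) : e i * e j = -(e j * e i) := by
  have hpolar : QuadraticMap.polar Q3 (Pi.single i 1) (Pi.single j 1) = 0 := by
    rw [QuadraticMap.polar]
    fin_cases i <;> fin_cases j <;> simp_all [Q3_apply]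
  rw [eq_neg_iff_add_eq_zero, e, e, ι_mul_ι_add_swap, hpolar, map_zero]

theorem e_mul_e_mul_self_of_ne {i j : Fin 3} (h : i ≠ j) : e i * e j * (e i * e j) = -1 := by
  rw [mul_assoc, ← mul_assoc (e j), e_mul_e_anticomm h.symm, neg_mul, mul_neg, mul_assoc,
    e_mul_self, mul_one, e_mul_self]

theorem e_mul_e_mul_e_mul_e_anticomm {i j k : Fin 3} (hij : i ≠ j) (hjk : j ≠ k)
    (hki : k ≠ i) : e i * e j * (e j * e k) = -(e j * e k * (e i * e j)) := by
  rw [mul_assoc, ← mul_assoc (e j) (e j), e_mul_self, one_mul, e_mul_e_anticomm hjk, neg_mul,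
    neg_neg, mul_assoc, ← mul_assoc (e j), e_mul_e_anticomm hij.symm, neg_mul, mul_assoc,
    e_mul_self, mul_one, mul_neg, e_mul_e_anticomm hki, neg_neg]

def bivector (x y z : ℝ) : Cl3 := x • (e 0 * e 1) + y • (e 1 * e 2) + z • (e 2 * e 0)

theorem bivector_mul_self (x y z : ℝ) :
    bivector x y z * bivector x y z = -(x ^ 2 + y ^ 2 + z ^ 2) • (1 : Cl3) := by
  have h01 := e_mul_e_mul_e_mul_e_anticomm (i := 0) (j := 1) (k := 2) (by decide) (by decide)
    (by decide)
  have h12 := e_mul_e_mul_e_mul_e_anticomm (i := 1) (j := 2) (k := 0) (by decide) (by decide)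
    (by decide)
  have h20 := e_mul_e_mul_e_mul_e_anticomm (i := 2) (j := 0) (k := 1) (by decide) (by decide)
    (by decide)
  simp only [bivector, mul_add, add_mul, smul_mul_smul_comm, h01, h12, h20,
    e_mul_e_mul_self_of_ne (show (0 : Fin 3) ≠ 1 by decide),
    e_mul_e_mul_self_of_ne (show (1 : Fin 3) ≠ 2 by decide),
    e_mul_e_mul_self_of_ne (show (2 : Fin 3) ≠ 0 by decide)]
  module

theorem inv_sqrt_three_smul_bivector_mul_self {x y z : ℝ} (hx : x ^ 2 = 1) (hy : y ^ 2 = 1)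
    (hz : z ^ 2 = 1) : (√3)⁻¹ • bivector x y z * ((√3)⁻¹ • bivector x y z) = -1 := by
  rw [smul_mul_smul_comm, bivector_mul_self, hx, hy, hz, smul_smul, ← mul_inv,
    mul_self_sqrt (by norm_num)]
  norm_num

theorem half_smul_add_bivector_eq {σ : ℝ} (hσ : σ ^ 2 = 1) (x y z : ℝ) :
    (1 / 2 : ℝ) • (σ • (1 : Cl3) + bivector x y z) =
      σ • (cos (π / 3) • 1 +
        sin (π / 3) • ((√3)⁻¹ • bivector (σ * x) (σ * y) (σ * z))) := by
  have h3 : √3 / 2 * (√3)⁻¹ = 1 / 2 := by field_simp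
  rw [cos_pi_div_three, sin_pi_div_three, smul_smul (√3 / 2), h3, bivector, bivector]
  match_scalars
  · ring
  · linear_combination (-x / 2) * hσ
  · linear_combination (-y / 2) * hσ
  · linear_combination (-z / 2) * hσ

/-- Each of the 16 spinors `½(±1 ± e₁e₂ ± e₂e₃ ± e₃e₁)` in Cl(3) equals
`± exp(πB/3)` for a bivector `B = (±e₁e₂ ± e₂e₃ ± e₃e₁)/√3` with `B² = -1` (the exponential
power series is expressed weakly, via arbitrary linear functionals), and hence has
multiplicative order dividing 6, in fact order 3 or 6. -/
theorem sixteen_spinors_are_exponentials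
    (s : Fin 4 → ℝ) (hs : ∀ i, s i = 1 ∨ s i = -1)
    (R : Cl3)
    (hR : R = (1 / 2 : ℝ) •
        (s 0 • (1 : Cl3) + s 1 • (e 0 * e 1) + s 2 • (e 1 * e 2) + s 3 • (e 2 * e 0))) :
    (∃ (σ : ℝ) (t : Fin 3 → ℝ) (B : Cl3),
      (σ = 1 ∨ σ = -1) ∧ (∀ i, t i = 1 ∨ t i = -1) ∧
      B = (Real.sqrt 3)⁻¹ •
            (t 0 • (e 0 * e 1) + t 1 • (e 1 * e 2) + t 2 • (e 2 * e 0)) ∧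
      B * B = -1 ∧
      (∀ f : Cl3 →ₗ[ℝ] ℝ,
        HasSum (fun n : ℕ => ((Real.pi / 3) ^ n / n.factorial) • f (B ^ n)) (f (σ • R)))) ∧
    R ^ 6 = 1 ∧ R ^ 2 ≠ 1 := by
  have hsq (i : Fin 4) : s i ^ 2 = 1 := by rcases hs i with h | h <;> simp [h]
  set t : Fin 3 → ℝ := fun i => s 0 * s i.succ
  have ht (i : Fin 3) : t i = 1 ∨ t i = -1 := by
    rcases hs 0 with h | h <;> rcases hs i.succ with h' | h' <;> simp [t, h, h']
  set B : Cl3 := (√3)⁻¹ • bivector (t 0) (t 1) (t 2)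
  have hB : B * B = -1 := by
    refine inv_sqrt_three_smul_bivector_mul_self ?_ ?_ ?_ <;> simp [t, mul_pow, hsq]
  have hRB : R = s 0 • (cos (π / 3) • 1 + sin (π / 3) • B) := by
    rw [hR, ← half_smul_add_bivector_eq (hsq 0), bivector]
    congr 1
    abel
  refine ⟨⟨s 0, t, B, hs 0, ht, rfl, hB, fun f => ?_⟩, ?_, ?_⟩
  · rw [hRB, smul_smul, ← sq, hsq, one_smul]
    exact hasSum_exp_series_of_mul_self_eq_neg_one hB f _
  · have h6 : ((6 : ℕ) : ℝ) * (π / 3) = 2 * π := by push_cast; ring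
    rw [hRB, smul_pow, cos_smul_one_add_sin_smul_pow hB, h6, cos_two_pi, sin_two_pi,
      show s 0 ^ 6 = (s 0 ^ 2) ^ 3 by ring, hsq]
    simp
  · rw [hRB, smul_pow, hsq, one_smul, cos_smul_one_add_sin_smul_pow hB]
    intro h
    refine (sin_pos_of_pos_of_lt_pi ?_ ?_).ne'
      (sin_eq_zero_of_cos_smul_one_add_sin_smul_eq_one hB h)
    all_goals push_cast; linarith [pi_pos]
end
end
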